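/- Let R > 0, a ∈ ℝ, let ψ̄ : ℝ² × ℝ → ℝ be twice continuously differentiable in the spatial variables, let ξ̄, ψ₁, …, ψ_m : ℝ² × ℝ → ℝ be continuously differentiable, let c₂, …, c_m ∈ ℝ be constants and set ν := ψ₁ − Σ_{n=2}^{m} c_n ψ_n. Suppose ∂_t ξ̄ + [ψ̄, ξ̄] = R⁻²[ψ̄, ν] and ∂_t ψ_k + [ψ̄, ψ_k] = 0 for k = 1, …, m hold everywhere, and let F : ℝ^m → ℝ be continuously differentiable. Then ∂_t(a ξ̄ + F(ψ₁, …, ψ_m)) + div((a(ξ̄ − R⁻² ν) + F(ψ₁, …, ψ_m)) ∇⊥ψ̄) = 0 at every point. -/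

import Mathlib

noncomputable section

/-- Partial derivative in the first spatial coordinate. -/
def pdx (f : ℝ × ℝ → ℝ) (p : ℝ × ℝ) : ℝ := fderiv ℝ f p ((1 : ℝ), (0 : ℝ))

/-- Partial derivative in the second spatial coordinate. -/
def pdy (f : ℝ × ℝ → ℝ) (p : ℝ × ℝ) : ℝ := fderiv ℝ f p ((0 : ℝ), (1 : ℝ))

/-- The Jacobian (canonical Poisson) bracket `[a,b] = a_x b_y - a_y b_x`. -/
def jb (a b : ℝ × ℝ → ℝ) (p : ℝ × ℝ) : ℝ := pdx a p * pdy b p - pdy a p * pdx b p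

/-- Perpendicular gradient `∇⊥ψ = (-ψ_y, ψ_x)`. -/
def pgrad (ψ : ℝ × ℝ → ℝ) (p : ℝ × ℝ) : ℝ × ℝ := (-(pdy ψ p), pdx ψ p)

/-- Gradient `∇ψ = (ψ_x, ψ_y)`. -/
def grad2 (ψ : ℝ × ℝ → ℝ) (p : ℝ × ℝ) : ℝ × ℝ := (pdx ψ p, pdy ψ p)

/-- Divergence of a planar vector field. -/
def div2 (v : ℝ × ℝ → ℝ × ℝ) (p : ℝ × ℝ) : ℝ :=
  pdx (fun q => (v q).1) p + pdy (fun q => (v q).2) p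

/-- Laplacian of a scalar field. -/
def lap2 (ψ : ℝ × ℝ → ℝ) (p : ℝ × ℝ) : ℝ := pdx (pdx ψ) p + pdy (pdy ψ) p

/-- Time derivative of a time-dependent field on ℝ² × ℝ. -/
def pdt (f : (ℝ × ℝ) × ℝ → ℝ) (z : (ℝ × ℝ) × ℝ) : ℝ :=
  fderiv ℝ f z ((0 : ℝ × ℝ), (1 : ℝ))

/-- Jacobian bracket of time-dependent fields, acting in the spatial variables at fixed time. -/
def jbt (a b : (ℝ × ℝ) × ℝ → ℝ) (z : (ℝ × ℝ) × ℝ) : ℝ :=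
  jb (fun q => a (q, z.2)) (fun q => b (q, z.2)) z.1

/-! Since `∇⊥ψ̄` is divergence-free (symmetry of second derivatives), the flux term reduces to
`div (G ∇⊥ψ̄) = ∇G · ∇⊥ψ̄ = [ψ̄, G]` with `G = a(ξ̄ − R⁻²ν) + F(ψ)`. Both `∂_t` and `[ψ̄, ·]` evaluate
the space-time derivative, so `∂_t + [ψ̄, ·]` is differentiation along `(∇⊥ψ̄, 1)` and obeys the
chain rule: it kills every `ψ_k` and sends `ξ̄` to `R⁻²[ψ̄, ν]`, which the `−aR⁻²ν` part of `G`
cancels. -/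

open ContinuousLinearMap

lemma fderiv_apply_eq_pdx_add_pdy (f : ℝ × ℝ → ℝ) (p w : ℝ × ℝ) :
    fderiv ℝ f p w = w.1 * pdx f p + w.2 * pdy f p := by
  have hw : w = w.1 • ((1 : ℝ), (0 : ℝ)) + w.2 • ((0 : ℝ), (1 : ℝ)) := by ext <;> simp
  conv_lhs => rw [hw]
  simp only [map_add, map_smul, smul_eq_mul, pdx, pdy]

lemma jb_eq_fderiv_pgrad (Ψ G : ℝ × ℝ → ℝ) (p : ℝ × ℝ) :
    jb Ψ G p = fderiv ℝ G p (pgrad Ψ p) := by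
  rw [fderiv_apply_eq_pdx_add_pdy, jb, pgrad]
  ring

lemma div2_smul {G : ℝ × ℝ → ℝ} {v : ℝ × ℝ → ℝ × ℝ} {p : ℝ × ℝ}
    (hG : DifferentiableAt ℝ G p) (hv : DifferentiableAt ℝ v p) :
    div2 (fun q => G q • v q) p = G p * div2 v p + fderiv ℝ G p (v p) := by
  simp only [div2, pdx, pdy, Prod.smul_fst, Prod.smul_snd, smul_eq_mul]
  rw [fderiv_fun_mul hG hv.fst, fderiv_fun_mul hG hv.snd, fderiv_apply_eq_pdx_add_pdy G p (v p)]
  simp only [pdx, pdy, add_apply, smul_apply, smul_eq_mul]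
  ring

lemma pdx_pdy_comm {Ψ : ℝ × ℝ → ℝ} {p : ℝ × ℝ} (hΨ : ContDiffAt ℝ 2 Ψ p) :
    pdx (pdy Ψ) p = pdy (pdx Ψ) p := by
  have hd : DifferentiableAt ℝ (fderiv ℝ Ψ) p :=
    (hΨ.fderiv_right le_rfl).differentiableAt one_ne_zero
  change fderiv ℝ (fun q => fderiv ℝ Ψ q ((0 : ℝ), (1 : ℝ))) p ((1 : ℝ), (0 : ℝ))
    = fderiv ℝ (fun q => fderiv ℝ Ψ q ((1 : ℝ), (0 : ℝ))) p ((0 : ℝ), (1 : ℝ))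
  rw [fderiv_clm_apply hd (differentiableAt_const _), fderiv_clm_apply hd (differentiableAt_const _)]
  simpa using hΨ.isSymmSndFDerivAt (by simp) _ _

lemma differentiableAt_pgrad {Ψ : ℝ × ℝ → ℝ} {p : ℝ × ℝ} (hΨ : ContDiffAt ℝ 2 Ψ p) :
    DifferentiableAt ℝ (pgrad Ψ) p := by
  have hd : DifferentiableAt ℝ (fderiv ℝ Ψ) p :=
    (hΨ.fderiv_right le_rfl).differentiableAt one_ne_zero
  exact ((hd.clm_apply (differentiableAt_const _)).neg).prodMk
    (hd.clm_apply (differentiableAt_const _))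

lemma div2_pgrad {Ψ : ℝ × ℝ → ℝ} {p : ℝ × ℝ} (hΨ : ContDiffAt ℝ 2 Ψ p) :
    div2 (pgrad Ψ) p = 0 := by
  have hneg : pdx (fun q => -pdy Ψ q) p = -pdx (pdy Ψ) p := by
    simp only [pdx, fderiv_fun_neg, neg_apply]
  simp only [div2, pgrad]
  rw [hneg, pdx_pdy_comm hΨ, neg_add_cancel]

lemma div2_smul_pgrad {Ψ G : ℝ × ℝ → ℝ} {p : ℝ × ℝ}
    (hΨ : ContDiffAt ℝ 2 Ψ p) (hG : DifferentiableAt ℝ G p) :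
    div2 (fun q => G q • pgrad Ψ q) p = jb Ψ G p := by
  rw [div2_smul hG (differentiableAt_pgrad hΨ), div2_pgrad hΨ, jb_eq_fderiv_pgrad, mul_zero,
    zero_add]

lemma fderiv_comp_pi_apply {𝕜 ι E G : Type*} [NontriviallyNormedField 𝕜] [Fintype ι]
    [NormedAddCommGroup E] [NormedSpace 𝕜 E] [NormedAddCommGroup G] [NormedSpace 𝕜 G]
    {F : (ι → 𝕜) → G} {g : ι → E → 𝕜} {x : E}
    (hF : DifferentiableAt 𝕜 F (fun k => g k x)) (hg : ∀ k, DifferentiableAt 𝕜 (g k) x) (v : E) :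
    fderiv 𝕜 (fun y => F (fun k => g k y)) x v
      = fderiv 𝕜 F (fun k => g k x) (fun k => fderiv 𝕜 (g k) x v) := by
  rw [fderiv_fun_comp x hF (differentiableAt_pi.2 hg), comp_apply, fderiv_pi hg]
  rfl

lemma fderiv_slice_apply {𝕜 E F G : Type*} [NontriviallyNormedField 𝕜]
    [NormedAddCommGroup E] [NormedSpace 𝕜 E] [NormedAddCommGroup F] [NormedSpace 𝕜 F]
    [NormedAddCommGroup G] [NormedSpace 𝕜 G] {f : E × F → G} {z : E × F}
    (hf : DifferentiableAt 𝕜 f z) (w : E) :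
    fderiv 𝕜 (fun q => f (q, z.2)) z.1 w = fderiv 𝕜 f z (w, 0) := by
  obtain ⟨x, y⟩ := z
  exact DFunLike.congr_fun (hf.hasFDerivAt.comp x (hasFDerivAt_prodMk_left (𝕜 := 𝕜) x y)).fderiv w

lemma jbt_eq_fderiv {Ψ f : (ℝ × ℝ) × ℝ → ℝ} {z : (ℝ × ℝ) × ℝ} (hf : DifferentiableAt ℝ f z) :
    jbt Ψ f z = fderiv ℝ f z (pgrad (fun q => Ψ (q, z.2)) z.1, 0) := by
  rw [jbt, jb_eq_fderiv_pgrad, fderiv_slice_apply hf]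

lemma pdt_add_jbt_eq_fderiv {Ψ f : (ℝ × ℝ) × ℝ → ℝ} {z : (ℝ × ℝ) × ℝ}
    (hf : DifferentiableAt ℝ f z) :
    pdt f z + jbt Ψ f z = fderiv ℝ f z (pgrad (fun q => Ψ (q, z.2)) z.1, 1) := by
  rw [jbt_eq_fderiv hf, pdt, ← map_add, Prod.mk_add_mk, zero_add, add_zero]

theorem il0aqg_casimir_local_conservation_law_general (R : ℝ) (a : ℝ)
    (m : ℕ) (hm : 0 < m)
    (ψbar ξbar : (ℝ × ℝ) × ℝ → ℝ) (ψ : Fin m → (ℝ × ℝ) × ℝ → ℝ) (c : Fin m → ℝ)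
    (hψbar : ∀ t : ℝ, ContDiff ℝ 2 (fun q : ℝ × ℝ => ψbar (q, t)))
    (hξbar : ContDiff ℝ 1 ξbar) (hψ : ∀ k, ContDiff ℝ 1 (ψ k))
    (ν : (ℝ × ℝ) × ℝ → ℝ)
    (hν : ν = fun z => ψ ⟨0, hm⟩ z - ∑ k ∈ Finset.univ.erase (⟨0, hm⟩ : Fin m), c k * ψ k z)
    (heq1 : ∀ z : (ℝ × ℝ) × ℝ, pdt ξbar z + jbt ψbar ξbar z = (R ^ 2)⁻¹ * jbt ψbar ν z)
    (heq2 : ∀ k, ∀ z : (ℝ × ℝ) × ℝ, pdt (ψ k) z + jbt ψbar (ψ k) z = 0)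
    (F : (Fin m → ℝ) → ℝ) (hF : ContDiff ℝ 1 F)
    (z : (ℝ × ℝ) × ℝ) :
    pdt (fun w => a * ξbar w + F (fun k => ψ k w)) z
      + div2 (fun q =>
          (a * (ξbar (q, z.2) - (R ^ 2)⁻¹ * ν (q, z.2)) + F (fun k => ψ k (q, z.2))) •
          pgrad (fun q' => ψbar (q', z.2)) q) z.1 = 0 := by
  have hξd : Differentiable ℝ ξbar := hξbar.differentiable one_ne_zero
  have hψd : ∀ k, Differentiable ℝ (ψ k) := fun k => (hψ k).differentiable one_ne_zero
  have hFd : Differentiable ℝ F := hF.differentiable one_ne_zero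
  have hνd : Differentiable ℝ ν := by rw [hν]; fun_prop
  set H : (ℝ × ℝ) × ℝ → ℝ := fun w => a * ξbar w + F (fun k => ψ k w)
  set G : (ℝ × ℝ) × ℝ → ℝ := fun w => a * (ξbar w - (R ^ 2)⁻¹ * ν w) + F (fun k => ψ k w)
  have hHd : Differentiable ℝ H := by fun_prop
  have hGd : Differentiable ℝ G := by fun_prop
  have hH : ∀ w, fderiv ℝ H z w
      = a * fderiv ℝ ξbar z w + fderiv ℝ F (fun k => ψ k z) (fun k => fderiv ℝ (ψ k) z w) := by
    intro w
    rw [fderiv_fun_add ((hξd z).const_mul a) (by fun_prop),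
      fderiv_const_mul (hξd z), add_apply, smul_apply, smul_eq_mul,
      fderiv_comp_pi_apply (hFd _) (fun k => hψd k z)]
  have hG : fderiv ℝ G z = fderiv ℝ H z - (a * (R ^ 2)⁻¹) • fderiv ℝ ν z := by
    have hGH : G = fun w => H w - a * (R ^ 2)⁻¹ * ν w := by funext w; simp only [G, H]; ring
    rw [hGH, fderiv_fun_sub (hHd z) ((hνd z).const_mul _), fderiv_const_mul (hνd z)]
  rw [div2_smul_pgrad (hψbar z.2).contDiffAt (by fun_prop)]
  calc pdt H z + jbt ψbar G z
      = (pdt H z + jbt ψbar H z) - a * ((R ^ 2)⁻¹ * jbt ψbar ν z) := by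
        rw [jbt_eq_fderiv (hGd z), jbt_eq_fderiv (hHd z), jbt_eq_fderiv (hνd z), hG, sub_apply,
          smul_apply, smul_eq_mul]
        ring
    _ = a * (pdt ξbar z + jbt ψbar ξbar z - (R ^ 2)⁻¹ * jbt ψbar ν z)
        + fderiv ℝ F (fun k => ψ k z) (fun k => pdt (ψ k) z + jbt ψbar (ψ k) z) := by
        simp only [pdt_add_jbt_eq_fderiv (hHd z), pdt_add_jbt_eq_fderiv (hξd z),
          pdt_add_jbt_eq_fderiv (hψd _ z), hH]
        ring
    _ = 0 := by simp only [heq1, heq2, sub_self, mul_zero, zero_add]; exact map_zero _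

/-- local (flux) form of the IL^(0,α)QG Casimirs
`∫ (a ξ̄ + F(ψ₁,…,ψ_m)) d²x` for α > 0. -/
theorem il0aqg_casimir_local_conservation_law (R : ℝ) (hR : 0 < R) (a : ℝ)
    (m : ℕ) (hm : 0 < m)
    (ψbar ξbar : (ℝ × ℝ) × ℝ → ℝ) (ψ : Fin m → (ℝ × ℝ) × ℝ → ℝ) (c : Fin m → ℝ)
    (hψbar : ∀ t : ℝ, ContDiff ℝ 2 (fun q : ℝ × ℝ => ψbar (q, t)))
    (hξbar : ContDiff ℝ 1 ξbar) (hψ : ∀ k, ContDiff ℝ 1 (ψ k))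
    (ν : (ℝ × ℝ) × ℝ → ℝ)
    (hν : ν = fun z => ψ ⟨0, hm⟩ z - ∑ k ∈ Finset.univ.erase (⟨0, hm⟩ : Fin m), c k * ψ k z)
    (heq1 : ∀ z : (ℝ × ℝ) × ℝ, pdt ξbar z + jbt ψbar ξbar z = (R ^ 2)⁻¹ * jbt ψbar ν z)
    (heq2 : ∀ k, ∀ z : (ℝ × ℝ) × ℝ, pdt (ψ k) z + jbt ψbar (ψ k) z = 0)
    (F : (Fin m → ℝ) → ℝ) (hF : ContDiff ℝ 1 F)
    (z : (ℝ × ℝ) × ℝ) :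
    pdt (fun w => a * ξbar w + F (fun k => ψ k w)) z
      + div2 (fun q =>
          (a * (ξbar (q, z.2) - (R ^ 2)⁻¹ * ν (q, z.2)) + F (fun k => ψ k (q, z.2))) •
          pgrad (fun q' => ψbar (q', z.2)) q) z.1 = 0 :=
  il0aqg_casimir_local_conservation_law_general R a m hm ψbar ξbar ψ c hψbar hξbar hψ ν hν heq1 heq2
    F hF z
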